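/- Lost-update non-linearizability: consider a history on the initially empty set in which insert(1) and insert(2) both return true, where insert(2)'s write to head.next (linking its node to tail) is overwritten by insert(1)'s subsequent write to head.next (linking its node to tail), so that the final list state contains only the value 1. Then any extension of this history with a sequential contains(2) necessarily returns false, and the resulting high-level history is not linearizable with respect to the set type. -/
import Mathlib


inductive SetOp where
  | ins (v : ℤ)
  | rem (v : ℤ)
  | cont (v : ℤ)
deriving DecidableEq

/-- State transition of the sequential set specification. -/
def stepSet : Finset ℤ → SetOp → Finset ℤ
  | q, .ins v => insert v q
  | q, .rem v => q.erase v
  | q, .cont _ => q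

/-- Response dictated by the sequential set specification. -/
def retSpec : Finset ℤ → SetOp → Bool
  | q, .ins v => decide (v ∉ q)
  | q, .rem v => decide (v ∈ q)
  | q, .cont v => decide (v ∈ q)

/-- A sequential history (list of operation/response pairs) is consistent with
the sequential set specification starting from state `q`. -/
def runOk : Finset ℤ → List (SetOp × Bool) → Prop
  | _, [] => True
  | q, (op, r) :: rest => r = retSpec q op ∧ runOk (stepSet q op) rest

/-- Final state after running a sequential history from `q`. -/
def finState : Finset ℤ → List (SetOp × Bool) → Finset ℤ
  | q, [] => q
  | q, (op, _) :: rest => finState (stepSet q op) rest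

/-- The sequential history obtained from history `H` by the permutation `π`. -/
def linList (H : List (SetOp × Bool)) (π : Equiv.Perm (Fin H.length)) :
    List (SetOp × Bool) :=
  (List.finRange H.length).map (fun k => H.get (π k))

/-- `π` is a linearization of the complete history `H` with real-time
precedence relation `prec` (on indices of `H`): the induced total order
extends `prec` and the resulting sequential history is consistent with the
sequential set specification starting from `∅`. -/
def Lin (H : List (SetOp × Bool)) (prec : ℕ → ℕ → Prop)
    (π : Equiv.Perm (Fin H.length)) : Prop :=
  (∀ i j : Fin H.length, prec i j → ((π.symm i : ℕ) < (π.symm j : ℕ))) ∧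
  runOk ∅ (linList H π)

/-- Lost update: the final list state is `{1}`, so any sequential `contains 2`
applied to it returns `false`; and the resulting high-level history, in which
`insert 1` and `insert 2` both returned `true` and both precede
`contains 2 → false`, is not linearizable w.r.t. the set type. -/
theorem stmt8 :
    retSpec ({1} : Finset ℤ) (SetOp.cont 2) = false ∧
    ¬ ∃ π : Equiv.Perm (Fin (([(SetOp.ins 1, true), (SetOp.ins 2, true),
        (SetOp.cont 2, false)] : List (SetOp × Bool)).length)),
      Lin [(SetOp.ins 1, true), (SetOp.ins 2, true), (SetOp.cont 2, false)]
        (fun i j => (i = 0 ∨ i = 1) ∧ j = 2) π := by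
  refine ⟨by decide, ?_⟩
  rintro ⟨π, hord, hrun⟩
  have hlen : ([(SetOp.ins 1, true), (SetOp.ins 2, true),
      (SetOp.cont 2, false)] : List (SetOp × Bool)).length = 3 := rfl
  let i0 : Fin ([(SetOp.ins 1, true), (SetOp.ins 2, true),
      (SetOp.cont 2, false)] : List (SetOp × Bool)).length := ⟨0, by omega⟩
  let i1 : Fin ([(SetOp.ins 1, true), (SetOp.ins 2, true),
      (SetOp.cont 2, false)] : List (SetOp × Bool)).length := ⟨1, by omega⟩
  let i2 : Fin ([(SetOp.ins 1, true), (SetOp.ins 2, true),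
      (SetOp.cont 2, false)] : List (SetOp × Bool)).length := ⟨2, by omega⟩
  have h0 := hord i0 i2 ⟨Or.inl rfl, rfl⟩
  have h1 := hord i1 i2 ⟨Or.inr rfl, rfl⟩
  have hb0 := (π.symm i0).isLt
  have hb1 := (π.symm i1).isLt
  have hb2 := (π.symm i2).isLt
  have hd01 : (π.symm i0 : ℕ) ≠ (π.symm i1 : ℕ) := fun h => by
    have := π.symm.injective (Fin.ext h)
    simp [i0, i1, Fin.ext_iff] at this
  have h2 : π.symm i2 = i2 := by
    apply Fin.ext; show (π.symm i2 : ℕ) = 2; omega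
  have hπ2 : π i2 = i2 := by
    have := π.apply_symm_apply i2
    rw [h2] at this; exact this
  have e02 : (π i0 : ℕ) ≠ 2 := fun h => by
    have : π i0 = π i2 := by rw [hπ2]; exact Fin.ext h
    have := π.injective this
    simp [i0, i2, Fin.ext_iff] at this
  have e12 : (π i1 : ℕ) ≠ 2 := fun h => by
    have : π i1 = π i2 := by rw [hπ2]; exact Fin.ext h
    have := π.injective this
    simp [i1, i2, Fin.ext_iff] at this
  have e01 : (π i0 : ℕ) ≠ (π i1 : ℕ) := fun h => by
    have := π.injective (Fin.ext h)
    simp [i0, i1, Fin.ext_iff] at this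
  have c0 := (π i0).isLt
  have c1 := (π i1).isLt
  have h01 : π i0 = i0 ∧ π i1 = i1 ∨ π i0 = i1 ∧ π i1 = i0 := by
    simp only [Fin.ext_iff]
    show ((π i0 : ℕ) = 0 ∧ (π i1 : ℕ) = 1) ∨ ((π i0 : ℕ) = 1 ∧ (π i1 : ℕ) = 0)
    omega
  have hlist : linList [(SetOp.ins 1, true), (SetOp.ins 2, true),
      (SetOp.cont 2, false)] π =
      [([(SetOp.ins 1, true), (SetOp.ins 2, true), (SetOp.cont 2, false)] :
        List (SetOp × Bool)).get (π i0),
       ([(SetOp.ins 1, true), (SetOp.ins 2, true), (SetOp.cont 2, false)] :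
        List (SetOp × Bool)).get (π i1),
       ([(SetOp.ins 1, true), (SetOp.ins 2, true), (SetOp.cont 2, false)] :
        List (SetOp × Bool)).get (π i2)] := rfl
  rw [hlist, hπ2] at hrun
  rcases h01 with ⟨ha, hb⟩ | ⟨ha, hb⟩ <;> rw [ha, hb] at hrun <;>
    simp [runOk, retSpec, stepSet, i0, i1, i2, List.get] at hrun
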